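/- Let v be a cut vertex of a connected graph G such that removing v and all edges incident to v decomposes G into connected components G_1, …, G_k with k ≥ 2. Then st_+(G) ≤ 2 + Σ_{i=1}^{k} st_+(G_i). -/

import Mathlib

open Matrix

/-- A finite simple undirected graph that allows loops: a symmetric adjacency
relation on the vertex type. -/
structure LGraph (V : Type*) where
  /-- the adjacency relation; `Adj v v` means a loop at `v`. -/
  Adj : V → V → Prop
  /-- adjacency is symmetric -/
  symm : ∀ {u v : V}, Adj u v → Adj v u

namespace LGraph

variable {V W : Type*}

/-- `𝒞` is a set-join cover of `G`: all components are nonempty subsets of the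
vertex set, and the union of the edge sets of the set-joins `K ∨ L` in `𝒞` is
exactly the edge set of `G`. A set-join is represented as an unordered pair
`s(K, L)` of subsets of the vertex set. -/
def IsSetJoinCover (G : LGraph V) (𝒞 : Set (Sym2 (Set V))) : Prop :=
  (∀ p ∈ 𝒞, ∀ K ∈ p, (K : Set V).Nonempty) ∧
    ∀ u v : V, G.Adj u v ↔ ∃ p ∈ 𝒞, ∃ K L : Set V, p = s(K, L) ∧ u ∈ K ∧ v ∈ L

/-- The component set `V(𝒞)` of a set-join cover: all subsets of the vertex set
appearing as a component of some set-join in `𝒞`. -/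
def comps (𝒞 : Set (Sym2 (Set V))) : Set (Set V) :=
  {K : Set V | ∃ p ∈ 𝒞, K ∈ p}

/-- The order `|𝒞|` of a set-join cover: the number of its components. -/
noncomputable def coverOrder (𝒞 : Set (Sym2 (Set V))) : ℕ :=
  (comps 𝒞).ncard

/-- The SNT-rank `st₊(G)` of a graph: the minimal order of a set-join cover of `G`. -/
noncomputable def st (G : LGraph V) : ℕ :=
  sInf {k : ℕ | ∃ 𝒞 : Set (Sym2 (Set V)), G.IsSetJoinCover 𝒞 ∧ coverOrder 𝒞 = k}

/-- An optimal set-join cover (OSJ cover): a set-join cover of order `st₊(G)`. -/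
def IsOptimalCover (G : LGraph V) (𝒞 : Set (Sym2 (Set V))) : Prop :=
  G.IsSetJoinCover 𝒞 ∧ coverOrder 𝒞 = G.st

/-- The graph `G(𝒞)` of a set-join cover: vertices are the components, and two
components `K`, `L` are adjacent iff the set-join `K ∨ L` belongs to `𝒞`. -/
def coverGraph (𝒞 : Set (Sym2 (Set V))) : LGraph (comps 𝒞) where
  Adj K L := s((K : Set V), (L : Set V)) ∈ 𝒞
  symm := by
    intro K L h
    rwa [Sym2.eq_swap] at h

/-- The neighbourhood of a vertex (`v ∈ neighborSet v` iff `v` has a loop). -/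
def neighborSet (G : LGraph V) (v : V) : Set V := {w | G.Adj v w}

/-- The induced subgraph on a set of vertices. -/
def induce (G : LGraph V) (S : Set V) : LGraph S where
  Adj a b := G.Adj (a : V) (b : V)
  symm := by intro a b h; exact G.symm h

/-- Adjacency for the disjoint union of two graphs. -/
def disjUnionAdj (G : LGraph V) (H : LGraph W) : V ⊕ W → V ⊕ W → Prop
  | Sum.inl a, Sum.inl b => G.Adj a b
  | Sum.inr a, Sum.inr b => H.Adj a b
  | _, _ => False

/-- The disjoint union `G ∪ H` of two graphs. -/
def disjUnion (G : LGraph V) (H : LGraph W) : LGraph (V ⊕ W) where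
  Adj := disjUnionAdj G H
  symm := by
    rintro (a | a) (b | b) h
    · exact G.symm h
    · exact h.elim
    · exact h.elim
    · exact H.symm h

/-- The graph with no edges on vertex type `V`. -/
def emptyGraph (V : Type*) : LGraph V where
  Adj _ _ := False
  symm := by intro u v h; exact h

/-- Adjacency for the join of a graph with a single looped vertex `none`. -/
def joinK1ℓAdj (G : LGraph V) : Option V → Option V → Prop
  | some a, some b => G.Adj a b
  | _, _ => True

/-- The join `G ∨ K₁ˡ` of `G` with a single looped vertex (the vertex `none`). -/
def joinK1ℓ (G : LGraph V) : LGraph (Option V) where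
  Adj := joinK1ℓAdj G
  symm := by
    rintro (_ | a) (_ | b) h
    · trivial
    · trivial
    · trivial
    · exact G.symm h

/-- The complete loopless graph `Kₙ` on `Fin n`. -/
def completeGraph (n : ℕ) : LGraph (Fin n) where
  Adj i j := i ≠ j
  symm := by intro i j h; exact h.symm

/-- The path `Pₙ` on `n` vertices (no loops). -/
def pathGraph (n : ℕ) : LGraph (Fin n) where
  Adj i j := (i : ℕ) + 1 = (j : ℕ) ∨ (j : ℕ) + 1 = (i : ℕ)
  symm := by intro i j h; exact h.symm

/-- The cycle `Cₙ` on `n` vertices (no loops), for `n ≥ 3`. -/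
def cycleGraph (n : ℕ) : LGraph (Fin n) where
  Adj i j := ((i : ℕ) + 1) % n = (j : ℕ) ∨ ((j : ℕ) + 1) % n = (i : ℕ)
  symm := by intro i j h; exact h.symm

/-- Adjacency for the generalised star: the centre is `none`, and `some ⟨i, j⟩`
is the vertex at distance `j + 1` from the centre on arm `i`. -/
def genStarAdj (t : ℕ) (k : Fin t → ℕ) :
    Option ((i : Fin t) × Fin (k i)) → Option ((i : Fin t) × Fin (k i)) → Prop
  | none, none => False
  | none, some ⟨_, j⟩ => (j : ℕ) = 0
  | some ⟨_, j⟩, none => (j : ℕ) = 0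
  | some ⟨i, j⟩, some ⟨i', j'⟩ => i = i' ∧ ((j : ℕ) + 1 = (j' : ℕ) ∨ (j' : ℕ) + 1 = (j : ℕ))

/-- The generalised star `star(k₁, …, k_t)` with central vertex `none` and `t`
arms, the `i`-th arm being a path with `k i` edges emanating from the centre. -/
def genStar (t : ℕ) (k : Fin t → ℕ) : LGraph (Option ((i : Fin t) × Fin (k i))) where
  Adj := genStarAdj t k
  symm := by
    rintro (_ | ⟨i, j⟩) (_ | ⟨i', j'⟩) h
    · exact h.elim
    · exact h
    · exact h
    · exact ⟨h.1.symm, h.2.symm⟩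

/-- A loopless leaf: a vertex with exactly one neighbour and no loop. -/
def LooplessLeaf (G : LGraph V) (v : V) : Prop :=
  ¬ G.Adj v v ∧ ∃ w : V, G.neighborSet v = {w}

/-- Delete from `G` all edges incident to the vertex `w`. -/
def deleteVertexEdges (G : LGraph V) (w : V) : LGraph V where
  Adj u v := G.Adj u v ∧ u ≠ w ∧ v ≠ w
  symm := by intro u v h; exact ⟨G.symm h.1, h.2.2, h.2.1⟩

/-- A graph is twin-free if no two distinct vertices have the same neighbourhood. -/
def TwinFree (G : LGraph V) : Prop :=
  ∀ u v : V, G.neighborSet u = G.neighborSet v → u = v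

/-- `G` has a unique optimal set-join cover. -/
def HasUniqueOptimalCover (G : LGraph V) : Prop :=
  ∃! 𝒞 : Set (Sym2 (Set V)), G.IsSetJoinCover 𝒞 ∧ coverOrder 𝒞 = G.st

/-- The cover graphs of two set-join covers are isomorphic. -/
def CoverGraphIso (𝒞 : Set (Sym2 (Set V))) (𝒟 : Set (Sym2 (Set W))) : Prop :=
  ∃ e : comps 𝒞 ≃ comps 𝒟,
    ∀ K L : comps 𝒞, (coverGraph 𝒞).Adj K L ↔ (coverGraph 𝒟).Adj (e K) (e L)

/-- All optimal set-join covers of `G` have isomorphic cover graphs. -/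
def HasUniqueOSJCoverGraph (G : LGraph V) : Prop :=
  ∀ 𝒞 𝒟 : Set (Sym2 (Set V)),
    G.IsOptimalCover 𝒞 → G.IsOptimalCover 𝒟 → CoverGraphIso 𝒞 𝒟

/-- Entrywise nonnegativity of a real matrix. -/
def EntrywiseNonneg {m n : Type*} (A : Matrix m n ℝ) : Prop :=
  ∀ i j, 0 ≤ A i j

/-- The SNT-rank `st₊(A)` of a matrix: the minimal `k` such that `A = B * C * Bᵀ`
with `B` an entrywise nonnegative `n × k` matrix and `C` a symmetric entrywise
nonnegative `k × k` matrix. -/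
noncomputable def stM {V : Type*} [Fintype V] (A : Matrix V V ℝ) : ℕ :=
  sInf {k : ℕ | ∃ B : Matrix V (Fin k) ℝ, ∃ C : Matrix (Fin k) (Fin k) ℝ,
    EntrywiseNonneg B ∧ C.IsSymm ∧ EntrywiseNonneg C ∧ A = B * C * Bᵀ}

/-- The SNT-rank `st₊(G)` of a graph defined via matrices: the minimum of
`st₊(A)` over all symmetric entrywise nonnegative matrices `A` whose pattern
graph is `G`. -/
noncomputable def stMGraph {V : Type*} [Fintype V] (G : LGraph V) : ℕ :=
  sInf {k : ℕ | ∃ A : Matrix V V ℝ, A.IsSymm ∧ EntrywiseNonneg A ∧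
    (∀ i j, G.Adj i j ↔ 0 < A i j) ∧ stM A = k}

/-- The loopy graph associated with a simple graph. -/
def _root_.SimpleGraph.toLGraph (G : SimpleGraph V) : LGraph V where
  Adj := G.Adj
  symm := by intro u v h; exact G.adj_symm h

/-- The edge star cover number `starc(G)` of a loopless simple graph: the minimal
number of stars (given by a centre and a nonempty set of leaves not containing
the centre) whose edge sets have union exactly `E(G)`. -/
noncomputable def starCoverNumber (G : SimpleGraph V) : ℕ :=
  sInf {k : ℕ | ∃ f : Fin k → V × Set V,
    (∀ i, (f i).2.Nonempty ∧ (f i).1 ∉ (f i).2) ∧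
    ∀ u v : V, G.Adj u v ↔
      ∃ i, (u = (f i).1 ∧ v ∈ (f i).2) ∨ (v = (f i).1 ∧ u ∈ (f i).2)}

/-!
The star `{v} ∨ N(v)` covers every edge at `v` at the cost of two components. Every other edge
lies inside a single part `P i`, since there are no edges between different parts, so the union
of optimal covers of the induced subgraphs `G[P i]`, transported into `V`, covers them with
`∑ st₊(G[P i])` components.
-/

@[ext]
theorem ext {G H : LGraph V} (h : ∀ u w, G.Adj u w ↔ H.Adj u w) : G = H := by
  cases G; cases H
  congr
  funext u w
  exact propext (h u w)

def JoinAdj (𝒞 : Set (Sym2 (Set V))) (u w : V) : Prop :=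
  ∃ p ∈ 𝒞, ∃ K L : Set V, p = s(K, L) ∧ u ∈ K ∧ w ∈ L

theorem isSetJoinCover_iff {G : LGraph V} {𝒞 : Set (Sym2 (Set V))} :
    G.IsSetJoinCover 𝒞 ↔
      (∀ p ∈ 𝒞, ∀ K ∈ p, K.Nonempty) ∧ ∀ u w, G.Adj u w ↔ JoinAdj 𝒞 u w :=
  Iff.rfl

theorem joinAdj_iff {𝒞 : Set (Sym2 (Set V))} {u w : V} :
    JoinAdj 𝒞 u w ↔ ∃ K L : Set V, s(K, L) ∈ 𝒞 ∧ u ∈ K ∧ w ∈ L := by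
  constructor
  · rintro ⟨_, hp, K, L, rfl, hu, hw⟩
    exact ⟨K, L, hp, hu, hw⟩
  · rintro ⟨K, L, hp, hu, hw⟩
    exact ⟨_, hp, K, L, rfl, hu, hw⟩

theorem joinAdj_insert_mk {𝒞 : Set (Sym2 (Set V))} {K L : Set V} {u w : V} :
    JoinAdj (insert s(K, L) 𝒞) u w ↔ (u ∈ K ∧ w ∈ L ∨ u ∈ L ∧ w ∈ K) ∨ JoinAdj 𝒞 u w := by
  simp only [joinAdj_iff, Set.mem_insert_iff, Sym2.eq_iff]
  constructor
  · rintro ⟨K', L', (⟨rfl, rfl⟩ | ⟨rfl, rfl⟩) | hp, hu, hw⟩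
    · exact Or.inl (Or.inl ⟨hu, hw⟩)
    · exact Or.inl (Or.inr ⟨hu, hw⟩)
    · exact Or.inr ⟨K', L', hp, hu, hw⟩
  · rintro ((⟨hu, hw⟩ | ⟨hu, hw⟩) | ⟨K', L', hp, hu, hw⟩)
    · exact ⟨K, L, Or.inl (Or.inl ⟨rfl, rfl⟩), hu, hw⟩
    · exact ⟨L, K, Or.inl (Or.inr ⟨rfl, rfl⟩), hu, hw⟩
    · exact ⟨K', L', Or.inr hp, hu, hw⟩

theorem joinAdj_iUnion {ι : Type*} {𝒞 : ι → Set (Sym2 (Set V))} {u w : V} :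
    JoinAdj (⋃ i, 𝒞 i) u w ↔ ∃ i, JoinAdj (𝒞 i) u w := by
  simp only [JoinAdj, Set.mem_iUnion]
  exact ⟨fun ⟨p, ⟨i, hp⟩, h⟩ => ⟨i, p, hp, h⟩, fun ⟨i, p, hp, h⟩ => ⟨p, ⟨i, hp⟩, h⟩⟩

def liftCover {S : Set V} (𝒞 : Set (Sym2 (Set S))) : Set (Sym2 (Set V)) :=
  Sym2.map (Set.image Subtype.val) '' 𝒞

theorem comps_image_map {U : Type*} (f : Set U → Set V) (𝒞 : Set (Sym2 (Set U))) :
    comps (Sym2.map f '' 𝒞) = f '' comps 𝒞 := by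
  ext K
  constructor
  · rintro ⟨_, ⟨q, hq, rfl⟩, hK⟩
    obtain ⟨A, hA, rfl⟩ := Sym2.mem_map.1 hK
    exact ⟨A, ⟨q, hq, hA⟩, rfl⟩
  · rintro ⟨A, ⟨q, hq, hA⟩, rfl⟩
    exact ⟨_, ⟨q, hq, rfl⟩, Sym2.mem_map.2 ⟨A, hA, rfl⟩⟩

theorem coverOrder_liftCover {S : Set V} (𝒞 : Set (Sym2 (Set S))) :
    coverOrder (liftCover 𝒞) = coverOrder 𝒞 := by
  rw [coverOrder, liftCover, comps_image_map,
    Set.ncard_image_of_injective _ (Set.image_injective.2 Subtype.val_injective), coverOrder]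

theorem joinAdj_liftCover {S : Set V} {𝒞 : Set (Sym2 (Set S))} {u w : V} :
    JoinAdj (liftCover 𝒞) u w ↔ ∃ (hu : u ∈ S) (hw : w ∈ S), JoinAdj 𝒞 ⟨u, hu⟩ ⟨w, hw⟩ := by
  simp only [joinAdj_iff]
  constructor
  · rintro ⟨K, L, ⟨q, hq, hqe⟩, hu, hw⟩
    induction q using Sym2.inductionOn with
    | hf A B =>
      rw [Sym2.map_mk, Sym2.eq_iff] at hqe
      rcases hqe with ⟨rfl, rfl⟩ | ⟨rfl, rfl⟩
      · obtain ⟨⟨u, hu'⟩, huA, rfl⟩ := hu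
        obtain ⟨⟨w, hw'⟩, hwB, rfl⟩ := hw
        exact ⟨hu', hw', A, B, hq, huA, hwB⟩
      · obtain ⟨⟨u, hu'⟩, huB, rfl⟩ := hu
        obtain ⟨⟨w, hw'⟩, hwA, rfl⟩ := hw
        exact ⟨hu', hw', B, A, Sym2.eq_swap ▸ hq, huB, hwA⟩
  · rintro ⟨hu, hw, A, B, hq, huA, hwB⟩
    exact ⟨_, _, ⟨_, hq, Sym2.map_mk _ _ _⟩, ⟨_, huA, rfl⟩, ⟨_, hwB, rfl⟩⟩

theorem IsSetJoinCover.nonempty_of_mem_liftCover {S : Set V} {G : LGraph S} {𝒞 : Set (Sym2 (Set S))}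
    (h : G.IsSetJoinCover 𝒞) : ∀ p ∈ liftCover 𝒞, ∀ K ∈ p, K.Nonempty := by
  rintro _ ⟨q, hq, rfl⟩ _ hK
  obtain ⟨A, hA, rfl⟩ := Sym2.mem_map.1 hK
  exact (h.1 q hq A hA).image _

theorem comps_insert_mk (𝒞 : Set (Sym2 (Set V))) (K L : Set V) :
    comps (insert s(K, L) 𝒞) = insert K (insert L (comps 𝒞)) := by
  ext A
  simp only [comps, Set.mem_ofPred_eq, Set.mem_insert_iff, or_and_right, exists_or,
    exists_eq_left, Sym2.mem_iff, or_assoc]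

theorem coverOrder_insert_mk_le (𝒞 : Set (Sym2 (Set V))) (K L : Set V) :
    coverOrder (insert s(K, L) 𝒞) ≤ coverOrder 𝒞 + 2 := by
  rw [coverOrder, comps_insert_mk]
  exact (Set.ncard_insert_le _ _).trans (Nat.add_le_add_right (Set.ncard_insert_le _ _) 1)

theorem comps_iUnion {ι : Type*} (𝒞 : ι → Set (Sym2 (Set V))) :
    comps (⋃ i, 𝒞 i) = ⋃ i, comps (𝒞 i) := by
  ext K
  simp only [comps, Set.mem_iUnion, Set.mem_ofPred_eq]
  exact ⟨fun ⟨p, ⟨i, hp⟩, hK⟩ => ⟨i, p, hp, hK⟩, fun ⟨i, p, hp, hK⟩ => ⟨p, ⟨i, hp⟩, hK⟩⟩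

theorem coverOrder_iUnion_le {ι : Type*} [Fintype ι] (𝒞 : ι → Set (Sym2 (Set V))) :
    coverOrder (⋃ i, 𝒞 i) ≤ ∑ i, coverOrder (𝒞 i) := by
  rw [coverOrder, comps_iUnion]
  simpa [coverOrder] using Finset.set_ncard_biUnion_le Finset.univ fun i => comps (𝒞 i)

theorem isSetJoinCover_singletons (G : LGraph V) :
    G.IsSetJoinCover {p | ∃ a b, G.Adj a b ∧ p = s({a}, {b})} := by
  refine ⟨?_, fun u w => ⟨fun h => ⟨_, ⟨u, w, h, rfl⟩, {u}, {w}, rfl, rfl, rfl⟩, ?_⟩⟩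
  · rintro _ ⟨a, b, -, rfl⟩ K hK
    rcases Sym2.mem_iff.1 hK with rfl | rfl
    exacts [Set.singleton_nonempty a, Set.singleton_nonempty b]
  · rintro ⟨_, ⟨a, b, hab, rfl⟩, K, L, hpe, hu, hw⟩
    rcases Sym2.eq_iff.1 hpe with ⟨rfl, rfl⟩ | ⟨rfl, rfl⟩
    · rwa [Set.mem_singleton_iff.1 hu, Set.mem_singleton_iff.1 hw]
    · rw [Set.mem_singleton_iff.1 hu, Set.mem_singleton_iff.1 hw]
      exact G.symm hab

theorem exists_isOptimalCover (G : LGraph V) : ∃ 𝒞, G.IsOptimalCover 𝒞 :=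
  Nat.sInf_mem (s := {k | ∃ 𝒞, G.IsSetJoinCover 𝒞 ∧ coverOrder 𝒞 = k})
    ⟨_, _, G.isSetJoinCover_singletons, rfl⟩

theorem st_le_coverOrder {G : LGraph V} {𝒞 : Set (Sym2 (Set V))} (h : G.IsSetJoinCover 𝒞) :
    G.st ≤ coverOrder 𝒞 :=
  Nat.sInf_le ⟨𝒞, h, rfl⟩

theorem deleteVertexEdges_eq_self {G : LGraph V} {v : V} (hv : G.neighborSet v = ∅) :
    G.deleteVertexEdges v = G := by
  have hv' (w : V) : ¬ G.Adj v w := Set.eq_empty_iff_forall_notMem.1 hv w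
  ext u w
  refine ⟨And.left, fun h => ⟨h, ?_, ?_⟩⟩
  · rintro rfl
    exact hv' w h
  · rintro rfl
    exact hv' u (G.symm h)

theorem induce_deleteVertexEdges {G : LGraph V} {v : V} {S : Set V} (hv : v ∉ S) :
    (G.deleteVertexEdges v).induce S = G.induce S := by
  ext u w
  exact ⟨And.left, fun h => ⟨h, ne_of_mem_of_not_mem u.2 hv, ne_of_mem_of_not_mem w.2 hv⟩⟩

theorem adj_iff_or_deleteVertexEdges_adj (G : LGraph V) (v u w : V) :
    G.Adj u w ↔ (u = v ∧ G.Adj v w ∨ G.Adj v u ∧ w = v) ∨ (G.deleteVertexEdges v).Adj u w := by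
  constructor
  · intro h
    by_cases hu : u = v
    · exact Or.inl (Or.inl ⟨hu, hu ▸ h⟩)
    by_cases hw : w = v
    · exact Or.inl (Or.inr ⟨hw ▸ G.symm h, hw⟩)
    exact Or.inr ⟨h, hu, hw⟩
  · rintro ((⟨rfl, h⟩ | ⟨h, rfl⟩) | ⟨h, -⟩)
    exacts [h, G.symm h, h]

theorem st_le_st_deleteVertexEdges_add_two (G : LGraph V) (v : V) :
    G.st ≤ (G.deleteVertexEdges v).st + 2 := by
  obtain hN | hN := (G.neighborSet v).eq_empty_or_nonempty
  · rw [deleteVertexEdges_eq_self hN]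
    exact Nat.le_add_right _ _
  obtain ⟨𝒞, h𝒞, hord⟩ := (G.deleteVertexEdges v).exists_isOptimalCover
  have hcover : G.IsSetJoinCover (insert s({v}, G.neighborSet v) 𝒞) := by
    refine isSetJoinCover_iff.2 ⟨?_, fun u w => ?_⟩
    · rintro p (rfl | hp) K hK
      · rcases Sym2.mem_iff.1 hK with rfl | rfl
        exacts [Set.singleton_nonempty v, hN]
      · exact h𝒞.1 p hp K hK
    · rw [joinAdj_insert_mk, ← (isSetJoinCover_iff.1 h𝒞).2, adj_iff_or_deleteVertexEdges_adj G v]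
      rfl
  calc G.st ≤ coverOrder (insert s({v}, G.neighborSet v) 𝒞) := st_le_coverOrder hcover
    _ ≤ coverOrder 𝒞 + 2 := coverOrder_insert_mk_le _ _ _
    _ = (G.deleteVertexEdges v).st + 2 := by rw [hord]

theorem st_le_sum_st_induce {ι : Type*} [Fintype ι] (G : LGraph V) (P : ι → Set V)
    (hP : ∀ u w, G.Adj u w → ∃ i, u ∈ P i ∧ w ∈ P i) :
    G.st ≤ ∑ i, (G.induce (P i)).st := by
  choose 𝒞 h𝒞 using fun i => (G.induce (P i)).exists_isOptimalCover
  have hcover : G.IsSetJoinCover (⋃ i, liftCover (𝒞 i)) := by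
    refine isSetJoinCover_iff.2 ⟨?_, fun u w => ?_⟩
    · simp only [Set.mem_iUnion]
      rintro p ⟨i, hp⟩
      exact (h𝒞 i).1.nonempty_of_mem_liftCover p hp
    · rw [joinAdj_iUnion]
      simp only [joinAdj_liftCover]
      constructor
      · intro h
        obtain ⟨i, hu, hw⟩ := hP u w h
        exact ⟨i, hu, hw, ((h𝒞 i).1.2 ⟨u, hu⟩ ⟨w, hw⟩).1 h⟩
      · rintro ⟨i, hu, hw, h⟩
        exact ((h𝒞 i).1.2 ⟨u, hu⟩ ⟨w, hw⟩).2 h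
  calc G.st ≤ coverOrder (⋃ i, liftCover (𝒞 i)) := st_le_coverOrder hcover
    _ ≤ ∑ i, coverOrder (liftCover (𝒞 i)) := coverOrder_iUnion_le _
    _ = ∑ i, (G.induce (P i)).st := by simp only [coverOrder_liftCover, fun i => (h𝒞 i).2]

theorem st_le_of_cut_vertex_general {V : Type*} (G : LGraph V)
    (v : V) (m : ℕ) (P : Fin m → Set V)
    (hcover : (⋃ i, P i) = {v}ᶜ)
    (hsep : ∀ i j : Fin m, ∀ x ∈ P i, ∀ y ∈ P j, G.Adj x y → i = j) :
    G.st ≤ 2 + ∑ i, (G.induce (P i)).st := by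
  have hv (i : Fin m) : v ∉ P i := fun hvi => by
    simpa [hcover] using Set.mem_iUnion_of_mem i hvi
  have hsplit (x y : V) (hxy : (G.deleteVertexEdges v).Adj x y) : ∃ i, x ∈ P i ∧ y ∈ P i := by
    obtain ⟨hxy, hx, hy⟩ := hxy
    obtain ⟨i, hxi⟩ := Set.mem_iUnion.1 (hcover ▸ hx : x ∈ ⋃ i, P i)
    obtain ⟨j, hyj⟩ := Set.mem_iUnion.1 (hcover ▸ hy : y ∈ ⋃ i, P i)
    exact ⟨i, hxi, hsep i j x hxi y hyj hxy ▸ hyj⟩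
  calc G.st ≤ (G.deleteVertexEdges v).st + 2 := G.st_le_st_deleteVertexEdges_add_two v
    _ ≤ ∑ i, ((G.deleteVertexEdges v).induce (P i)).st + 2 := by
      gcongr
      exact st_le_sum_st_induce _ P hsplit
    _ = 2 + ∑ i, (G.induce (P i)).st := by
      simp only [induce_deleteVertexEdges (hv _), add_comm]

/-- Let `v` be a cut vertex of a connected graph `G`, so that removing
`v` and all edges incident to `v` decomposes `G` into connected components `G₁, …, G_m`
(`m ≥ 2`), given by the partition `P` of the remaining vertices.  Then
`st₊(G) ≤ 2 + ∑ᵢ st₊(Gᵢ)`. -/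
theorem st_le_of_cut_vertex {V : Type*} [Fintype V] (G : LGraph V)
    (hconn : ∀ a b : V, Relation.ReflTransGen G.Adj a b)
    (v : V) (m : ℕ) (hm : 2 ≤ m) (P : Fin m → Set V)
    (hdisj : ∀ i j : Fin m, i ≠ j → Disjoint (P i) (P j))
    (hne : ∀ i, (P i).Nonempty)
    (hcover : (⋃ i, P i) = {v}ᶜ)
    (hcomp : ∀ i, ∀ a b : P i, Relation.ReflTransGen (G.induce (P i)).Adj a b)
    (hsep : ∀ i j : Fin m, ∀ x ∈ P i, ∀ y ∈ P j, G.Adj x y → i = j) :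
    G.st ≤ 2 + ∑ i, (G.induce (P i)).st :=
  st_le_of_cut_vertex_general G v m P hcover hsep
end LGraph
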